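/- Let I ⊆ F_q[x₁,…,x_n] be a zero-dimensional ideal admitting an irredundant primary decomposition I = I₁ ∩ I₂ ∩ ⋯ ∩ I_t into pairwise comaximal primary ideals I₁, …, I_t. Then the kernel of the F_q-linear map Ψ_I on F_q[x₁,…,x_n]/I is a t-dimensional F_q-vector space; that is, dim_{F_q} Ker(Ψ_I) = t, so Ker(Ψ_I) ≅ F_q^t as F_q-vector spaces. -/

import Mathlib

/-!
By the Chinese remainder theorem `F_q[x]/I ≅ ∏ᵢ F_q[x]/Iᵢ` as `F_q`-algebras, and the kernel of
`Ψ`, the fixed points of Frobenius, splits along this product. In each factor the nilradical is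
prime, so for a fixed point `x` the vanishing product `∏_{c ∈ F_q} (x - c) = x ^ q - x = 0` makes
some `x - c` nilpotent; being itself fixed by Frobenius, `x - c` is then `0`. Hence the fixed points
are exactly `F_q ^ t`.
-/

open Polynomial LinearMap FiniteField

theorem IsNilpotent.eq_zero_of_pow_eq_self {M : Type*} [MonoidWithZero M] {y : M}
    (hy : IsNilpotent y) {q : ℕ} (hq : 1 < q) (h : y ^ q = y) : y = 0 := by
  obtain ⟨m, hm⟩ := hy
  have hiter : ∀ k, y ^ q ^ k = y := by
    intro k
    induction k with
    | zero => exact pow_one y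
    | succ k ih => rw [_root_.pow_succ, pow_mul, ih, h]
  rw [← hiter m]
  exact pow_eq_zero_of_le (Nat.lt_pow_self hq).le hm

theorem Ideal.IsPrimary.isPrime_nilradical_quotient {R : Type*} [CommRing R] {J : Ideal R}
    (hJ : J.IsPrimary) : (nilradical (R ⧸ J)).IsPrime := by
  have := Ideal.isPrime_radical hJ
  have hker : RingHom.ker (Ideal.Quotient.mk J) ≤ J.radical :=
    (Ideal.mk_ker).trans_le J.le_radical
  rw [nilradical, Ideal.zero_eq_bot, ← Ideal.map_quotient_self J,
    ← Ideal.map_radical_of_surjective Ideal.Quotient.mk_surjective (Ideal.mk_ker).le]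
  exact Ideal.map_isPrime_of_surjective Ideal.Quotient.mk_surjective hker

theorem nontrivial_of_isPrime_nilradical {R : Type*} [CommSemiring R] [h : (nilradical R).IsPrime] :
    Nontrivial R :=
  nontrivial_of_ne 1 0 fun h1 => h.ne_top ((Ideal.eq_top_iff_one _).mpr (h1 ▸ zero_mem _))

noncomputable def Ideal.quotientInfAlgEquivPiQuotient (S : Type*) [CommSemiring S]
    {R : Type*} [CommRing R] [Algebra S R] {ι : Type*} [Finite ι] (I : ι → Ideal R)
    (hI : Pairwise (Function.onFun IsCoprime I)) : (R ⧸ ⨅ i, I i) ≃ₐ[S] ∀ i, R ⧸ I i :=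
  AlgEquiv.ofRingEquiv (f := Ideal.quotientInfRingEquivPiQuotient I hI) fun _ => rfl

namespace FiniteField

variable {Fq : Type*} [Field Fq] [Fintype Fq]

theorem prod_X_sub_C_eq_X_pow_card_sub_X :
    ∏ c : Fq, (X - C c) = (X ^ Fintype.card Fq - X : Fq[X]) := by
  have hq : 1 < Fintype.card Fq := Fintype.one_lt_card
  have hmonic : (X ^ Fintype.card Fq - X : Fq[X]).Monic :=
    monic_X_pow_sub (by rw [degree_X]; exact_mod_cast hq)
  have h := prod_multiset_X_sub_C_of_monic_of_roots_card_eq hmonic (by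
    rw [roots_X_pow_card_sub_X, X_pow_card_sub_X_natDegree_eq Fq hq]; rfl)
  rwa [roots_X_pow_card_sub_X] at h

variable (Fq) (A : Type*) [CommRing A] [Algebra Fq A]

noncomputable def psi : A →ₗ[Fq] A := (frobeniusAlgHom Fq A).toLinearMap - LinearMap.id

variable {Fq A}

theorem mem_ker_psi {x : A} : x ∈ ker (psi Fq A) ↔ x ^ Fintype.card Fq = x := by
  simp [psi, sub_eq_zero]

theorem prod_sub_algebraMap_eq_zero_of_pow_card_eq {x : A} (hx : x ^ Fintype.card Fq = x) :
    ∏ c : Fq, (x - algebraMap Fq A c) = 0 := by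
  simpa [hx] using congrArg (aeval x) (prod_X_sub_C_eq_X_pow_card_sub_X (Fq := Fq))

theorem exists_algebraMap_eq_of_pow_card_eq [(nilradical A).IsPrime] {x : A}
    (hx : x ^ Fintype.card Fq = x) : ∃ c : Fq, algebraMap Fq A c = x := by
  obtain ⟨c, -, hc⟩ := Ideal.IsPrime.prod_mem_iff.mp
    ((prod_sub_algebraMap_eq_zero_of_pow_card_eq hx).symm ▸ zero_mem (nilradical A))
  have hfix : (x - algebraMap Fq A c) ^ Fintype.card Fq = x - algebraMap Fq A c := by
    rw [← frobeniusAlgHom_apply, map_sub, AlgHom.commutes, frobeniusAlgHom_apply, hx]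
  exact ⟨c, (sub_eq_zero.mp ((mem_nilradical.mp hc).eq_zero_of_pow_eq_self Fintype.one_lt_card hfix)).symm⟩

theorem finrank_ker_psi_congr {B : Type*} [CommRing B] [Algebra Fq B] (e : A ≃ₐ[Fq] B) :
    Module.finrank Fq (ker (psi Fq A)) = Module.finrank Fq (ker (psi Fq B)) := by
  have hmap : (ker (psi Fq A)).map (e.toLinearEquiv : A →ₗ[Fq] B) = ker (psi Fq B) := by
    ext y
    rw [Submodule.map_equiv_eq_comap_symm, Submodule.mem_comap, mem_ker_psi, mem_ker_psi]
    change e.symm y ^ _ = e.symm y ↔ _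
    rw [← map_pow, e.symm.injective.eq_iff]
  rw [← hmap, LinearEquiv.finrank_map_eq]

theorem ker_psi_pi_eq_range {ι : Type*} (B : ι → Type*) [∀ i, CommRing (B i)]
    [∀ i, Algebra Fq (B i)] [∀ i, (nilradical (B i)).IsPrime] :
    ker (psi Fq (∀ i, B i)) = range (piMap fun i => Algebra.linearMap Fq (B i)) := by
  ext x
  rw [mem_ker_psi, mem_range]
  constructor
  · intro hx
    choose c hc using fun i => exists_algebraMap_eq_of_pow_card_eq (congrFun hx i)
    exact ⟨c, funext hc⟩
  · rintro ⟨c, rfl⟩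
    funext i
    simp [← map_pow, pow_card]

theorem finrank_ker_psi_pi {ι : Type*} [Fintype ι] (B : ι → Type*) [∀ i, CommRing (B i)]
    [∀ i, Algebra Fq (B i)] [∀ i, (nilradical (B i)).IsPrime] :
    Module.finrank Fq (ker (psi Fq (∀ i, B i))) = Fintype.card ι := by
  have : ∀ i, Nontrivial (B i) := fun _ => nontrivial_of_isPrime_nilradical
  have hinj : Function.Injective (piMap fun i => Algebra.linearMap Fq (B i)) := by
    rw [coe_piMap, Pi.map_injective]
    exact fun i => (algebraMap Fq (B i)).injective
  rw [ker_psi_pi_eq_range, finrank_range_of_inj hinj, Module.finrank_fintype_fun_eq_card]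

end FiniteField

theorem finrank_ker_psi_eq_number_of_primary_components_general
    {Fq : Type*} [Field Fq] [Fintype Fq] (n t : ℕ)
    (I : Fin t → Ideal (MvPolynomial (Fin n) Fq))
    (hprimary : ∀ i, (I i).IsPrimary)
    (hcomax : ∀ i j, i ≠ j → I i ⊔ I j = ⊤)
    (K : Submodule Fq (MvPolynomial (Fin n) Fq ⧸ (⨅ i, I i)))
    (hK : ∀ f, f ∈ K ↔ f ^ Fintype.card Fq = f) :
    Module.finrank Fq K = t := by
  have hKer : K = ker (psi Fq _) := Submodule.ext fun f => (hK f).trans mem_ker_psi.symm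
  have := fun i => (hprimary i).isPrime_nilradical_quotient
  have hcop : Pairwise (Function.onFun IsCoprime I) := fun i j hij =>
    Ideal.isCoprime_iff_sup_eq.mpr (hcomax i j hij)
  rw [hKer, finrank_ker_psi_congr (Ideal.quotientInfAlgEquivPiQuotient Fq I hcop),
    finrank_ker_psi_pi, Fintype.card_fin]

/-- Let `I ⊆ F_q[x₁,…,x_n]` be a zero-dimensional ideal admitting an irredundant primary
decomposition `I = I₁ ∩ ⋯ ∩ I_t` into pairwise comaximal primary ideals.  Then the kernel
of the `F_q`-linear map `Ψ_I : f̄ ↦ f̄^q − f̄` on `F_q[x₁,…,x_n]/I`, i.e. the `F_q`-subspace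
`{f̄ : f̄^q = f̄}`, has dimension `t` over `F_q`, so `Ker(Ψ_I) ≅ F_q^t`. -/
theorem finrank_ker_psi_eq_number_of_primary_components
    {Fq : Type*} [Field Fq] [Fintype Fq] (n t : ℕ)
    (I : Fin t → Ideal (MvPolynomial (Fin n) Fq))
    (hprimary : ∀ i, (I i).IsPrimary)
    (hcomax : ∀ i j, i ≠ j → I i ⊔ I j = ⊤)
    (hirred : ∀ i, ¬ (⨅ j, ⨅ _ : j ≠ i, I j) ≤ I i)
    (hzerodim : FiniteDimensional Fq (MvPolynomial (Fin n) Fq ⧸ (⨅ i, I i)))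
    (K : Submodule Fq (MvPolynomial (Fin n) Fq ⧸ (⨅ i, I i)))
    (hK : ∀ f, f ∈ K ↔ f ^ Fintype.card Fq = f) :
    Module.finrank Fq K = t :=
  finrank_ker_psi_eq_number_of_primary_components_general n t I hprimary hcomax K hK
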